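/- For integers n > k ≥ 1, the partial Bell polynomials satisfy (n-k)·x_1·B_{n,k}(x_1, x_2, ...) = Σ_{α=1}^{n-k} binomial(n,α)·[(k+1) - (n+1)/(α+1)]·x_{α+1}·B_{n-α,k}(x_1, x_2, ...). -/

import Mathlib

open Finset

/- The partial Bell polynomial `B_{n,k}(x₁, x₂, …)`: the sum over all set
partitions of `{1,…,n}` into `k` nonempty blocks of the products of
`x_{block size}` over the blocks. -/
open Classical in
noncomputable def Bell (x : ℕ → ℚ) (n k : ℕ) : ℚ :=
  ∑ P ∈ Finset.univ.filter (fun P : Finset (Finset (Fin n)) =>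
      P.card = k ∧ (∀ p ∈ P, p.Nonempty) ∧
      (∀ p ∈ P, ∀ q ∈ P, p ≠ q → p ∩ q = ∅) ∧ P.sup id = Finset.univ),
    ∏ p ∈ P, x p.card

/-
Deleting one block from a partition of `{0, …, n}` into `k + 1` blocks gives two recurrences.
Deleting the block containing `0` gives
`B_{n+1,k+1} = ∑_j C(n, j) x_{j+1} B_{n-j,k}`, and deleting an arbitrary marked block gives
`(k+1) B_{n+1,k+1} = ∑_j C(n+1, j+1) x_{j+1} B_{n-j,k}`. Since
`C(n+1, j+1) = C(n, j) (n+1)/(j+1)`, subtracting the second from `k + 1` times the first gives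
`∑_{j=0}^{n} C(n, j) [(k+1) - (n+1)/(j+1)] x_{j+1} B_{n-j,k} = 0`. Its `j = 0` term is
`(k - n) x_1 B_{n,k}`, and the terms with `n - j < k` vanish.
-/

section Counting

variable {β M : Type*} [AddCommMonoid M] (f : ℕ → M)

lemma sum_powerset_filter_nonempty_apply_card (s : Finset β) :
    ∑ t ∈ s.powerset with t.Nonempty, f #t =
      ∑ j ∈ range #s, (#s).choose (j + 1) • f (j + 1) := by
  have h := sum_powerset_apply_card (fun m ↦ if m = 0 then 0 else f m) (x := s)
  rw [sum_range_succ'] at h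
  simp only [Nat.add_eq_zero_iff, one_ne_zero, and_false, ↓reduceIte,
    Nat.choose_zero_right, nsmul_zero, add_zero] at h
  rw [sum_filter, ← h]
  exact sum_congr rfl fun t _ ↦ by simp only [← card_ne_zero, ite_not]

lemma sum_powerset_filter_mem_apply_card [DecidableEq β] {s : Finset β} {a : β} (ha : a ∈ s) :
    ∑ t ∈ s.powerset with a ∈ t, f #t = ∑ j ∈ range #s, (#s - 1).choose j • f (j + 1) := by
  obtain ⟨t, hat, rfl⟩ : ∃ t, a ∉ t ∧ s = insert a t :=
    ⟨s.erase a, notMem_erase a s, (insert_erase ha).symm⟩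
  have hsub : ∀ u ∈ t.powerset, a ∉ u := fun u hu h ↦ hat (mem_powerset.1 hu h)
  rw [sum_filter, sum_powerset_insert hat, card_insert_of_notMem hat, Nat.add_sub_cancel,
    ← sum_powerset_apply_card (fun j ↦ f (j + 1)), sum_eq_zero fun u hu ↦ if_neg (hsub u hu),
    zero_add]
  exact sum_congr rfl fun u hu ↦ by
    rw [if_pos (mem_insert_self a u), card_insert_of_notMem (hsub u hu)]

end Counting

section SetPartition

variable {γ δ : Type*} [DecidableEq γ] [DecidableEq δ]

def IsSetPartition (s : Finset γ) (P : Finset (Finset γ)) : Prop :=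
  (∀ p ∈ P, p.Nonempty) ∧ (∀ p ∈ P, ∀ q ∈ P, p ≠ q → p ∩ q = ∅) ∧ P.sup id = s

namespace IsSetPartition

variable {s b : Finset γ} {P : Finset (Finset γ)}

lemma mem_iff (h : IsSetPartition s P) {a : γ} : a ∈ s ↔ ∃ p ∈ P, a ∈ p := by
  rw [← h.2.2, mem_sup]; rfl

lemma subset (h : IsSetPartition s P) {p : Finset γ} (hp : p ∈ P) : p ⊆ s :=
  fun _ ha ↦ h.mem_iff.2 ⟨p, hp, ha⟩

lemma eq_of_mem (h : IsSetPartition s P) {p q : Finset γ} (hp : p ∈ P) (hq : q ∈ P) {a : γ}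
    (hap : a ∈ p) (haq : a ∈ q) : p = q := by
  by_contra hpq
  simpa [h.2.1 p hp q hq hpq] using mem_inter.2 ⟨hap, haq⟩

lemma card_filter_mem (h : IsSetPartition s P) {a : γ} (ha : a ∈ s) : #{p ∈ P | a ∈ p} = 1 := by
  obtain ⟨p, hp, hap⟩ := h.mem_iff.1 ha
  refine card_eq_one.2 ⟨p, ext fun q ↦ ?_⟩
  rw [mem_filter, mem_singleton]
  exact ⟨fun ⟨hq, haq⟩ ↦ h.eq_of_mem hq hp haq hap, by rintro rfl; exact ⟨hp, hap⟩⟩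

lemma card_le (h : IsSetPartition s P) : #P ≤ #s := by
  calc #P = ∑ _p ∈ P, 1 := by simp
    _ ≤ ∑ p ∈ P, #p := sum_le_sum fun p hp ↦ (h.1 p hp).card_pos
    _ = #s := by
      rw [← h.2.2, sup_eq_biUnion]
      exact (card_biUnion fun p hp q hq hpq ↦
        disjoint_iff_inter_eq_empty.2 (h.2.1 p hp q hq hpq)).symm

lemma erase (h : IsSetPartition s P) (hb : b ∈ P) : IsSetPartition (s \ b) (P.erase b) := by
  refine ⟨fun p hp ↦ h.1 p (mem_of_mem_erase hp),
    fun p hp q hq ↦ h.2.1 p (mem_of_mem_erase hp) q (mem_of_mem_erase hq), ?_⟩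
  ext a
  simp only [mem_sup, mem_erase, id, mem_sdiff, h.mem_iff]
  constructor
  · rintro ⟨p, ⟨hpb, hp⟩, hap⟩
    exact ⟨⟨p, hp, hap⟩, fun hab ↦ hpb (h.eq_of_mem hp hb hap hab)⟩
  · rintro ⟨⟨p, hp, hap⟩, hab⟩
    exact ⟨p, ⟨by rintro rfl; exact hab hap, hp⟩, hap⟩

lemma notMem_of_sdiff (h : IsSetPartition (s \ b) P) (hb : b.Nonempty) : b ∉ P := by
  intro hbP
  obtain ⟨a, ha⟩ := hb
  exact (mem_sdiff.1 (h.subset hbP ha)).2 ha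

lemma insert_of_sdiff (h : IsSetPartition (s \ b) P) (hbs : b ⊆ s) (hb : b.Nonempty) :
    IsSetPartition s (insert b P) := by
  have hdisj : ∀ p ∈ P, b ∩ p = ∅ := fun p hp ↦
    disjoint_iff_inter_eq_empty.1 (disjoint_of_subset_right (h.subset hp) disjoint_sdiff)
  refine ⟨(forall_mem_insert _ _ _).2 ⟨hb, h.1⟩, ?_, ?_⟩
  · simp only [mem_insert]
    rintro p (rfl | hp) q (rfl | hq) hpq
    · exact absurd rfl hpq
    · exact hdisj q hq
    · rw [inter_comm]; exact hdisj p hp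
    · exact h.2.1 p hp q hq hpq
  · rw [sup_insert, h.2.2, id, sup_eq_union, union_sdiff_of_subset hbs]

lemma map_iff (f : γ ↪ δ) :
    IsSetPartition (s.map f) (P.map (mapEmbedding f).toEmbedding) ↔ IsSetPartition s P := by
  have hsup : (P.map (mapEmbedding f).toEmbedding).sup id = (P.sup id).map f := by
    ext c
    simp only [mem_sup, mem_map, RelEmbedding.coe_toEmbedding, mapEmbedding_apply, id,
      exists_exists_and_eq_and]
    exact ⟨fun ⟨p, hp, a, ha, hac⟩ ↦ ⟨a, ⟨p, hp, ha⟩, hac⟩,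
      fun ⟨a, ⟨p, hp, ha⟩, hac⟩ ↦ ⟨p, hp, a, ha, hac⟩⟩
  simp only [IsSetPartition, forall_mem_map, hsup, map_inj, RelEmbedding.coe_toEmbedding,
    mapEmbedding_apply, map_nonempty, ← map_inter, map_eq_empty, ne_eq]

end IsSetPartition

open Classical in
noncomputable def setPartitions (s : Finset γ) (k : ℕ) : Finset (Finset (Finset γ)) :=
  {P ∈ s.powerset.powerset | #P = k ∧ IsSetPartition s P}

lemma mem_setPartitions {s : Finset γ} {k : ℕ} {P : Finset (Finset γ)} :
    P ∈ setPartitions s k ↔ #P = k ∧ IsSetPartition s P := by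
  simp only [setPartitions, mem_filter, mem_powerset, and_iff_right_iff_imp]
  exact fun h _ hp ↦ mem_powerset.2 (h.2.subset hp)

section PartialBell

variable {R : Type*} [CommSemiring R] (x : ℕ → R)

noncomputable def partialBell (s : Finset γ) (k : ℕ) : R :=
  ∑ P ∈ setPartitions s k, ∏ p ∈ P, x #p

lemma partialBell_eq_zero_of_card_lt {s : Finset γ} {k : ℕ} (h : #s < k) :
    partialBell x s k = 0 :=
  sum_eq_zero fun P hP ↦ by
    obtain ⟨rfl, hpart⟩ := mem_setPartitions.1 hP
    exact absurd hpart.card_le h.not_ge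

lemma partialBell_map (f : γ ↪ δ) (s : Finset γ) (k : ℕ) :
    partialBell x (s.map f) k = partialBell x s k := by
  have hparts : setPartitions (s.map f) k =
      (setPartitions s k).map (mapEmbedding (mapEmbedding f).toEmbedding).toEmbedding := by
    ext Q
    simp only [mem_map, mem_setPartitions, RelEmbedding.coe_toEmbedding, mapEmbedding_apply]
    constructor
    · rintro ⟨hQk, hQ⟩
      have hQs : Q ⊆ s.powerset.map (mapEmbedding f).toEmbedding := fun q hq ↦ by
        obtain ⟨u, hu, rfl⟩ := subset_map_iff.1 (hQ.subset hq)
        exact mem_map_of_mem _ (mem_powerset.2 hu)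
      obtain ⟨P, -, rfl⟩ := subset_map_iff.1 hQs
      exact ⟨P, ⟨by simpa using hQk, (IsSetPartition.map_iff f).1 hQ⟩, rfl⟩
    · rintro ⟨P, ⟨rfl, hP⟩, rfl⟩
      exact ⟨card_map _, (IsSetPartition.map_iff f).2 hP⟩
  rw [partialBell, hparts, sum_map]
  refine sum_congr rfl fun P _ ↦ ?_
  simp [prod_map]

theorem sum_setPartitions_succ_sum_mul_prod (w : Finset γ → R) (s : Finset γ) (k : ℕ) :
    ∑ P ∈ setPartitions s (k + 1), ∑ b ∈ P, w b * ∏ p ∈ P, x #p =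
      ∑ b ∈ s.powerset with b.Nonempty, w b * x #b * partialBell x (s \ b) k := by
  simp_rw [partialBell, mul_sum, sum_sigma']
  refine sum_nbij' (fun q ↦ ⟨q.2, q.1.erase q.2⟩) (fun q ↦ ⟨insert q.1 q.2, q.1⟩) ?_ ?_ ?_ ?_ ?_
  · rintro ⟨P, b⟩ hq
    obtain ⟨hP, hb⟩ := mem_sigma.1 hq
    obtain ⟨hPk, hPs⟩ := mem_setPartitions.1 hP
    refine mem_sigma.2 ⟨mem_filter.2 ⟨mem_powerset.2 (hPs.subset hb), hPs.1 b hb⟩,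
      mem_setPartitions.2 ⟨?_, hPs.erase hb⟩⟩
    rw [card_erase_of_mem hb, hPk, Nat.add_sub_cancel]
  · rintro ⟨b, P⟩ hq
    obtain ⟨hb, hP⟩ := mem_sigma.1 hq
    obtain ⟨hbs, hbne⟩ := mem_filter.1 hb
    obtain ⟨hPk, hPs⟩ := mem_setPartitions.1 hP
    refine mem_sigma.2 ⟨mem_setPartitions.2 ⟨?_, hPs.insert_of_sdiff (mem_powerset.1 hbs) hbne⟩,
      mem_insert_self b P⟩
    rw [card_insert_of_notMem (hPs.notMem_of_sdiff hbne), hPk]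
  · rintro ⟨P, b⟩ hq
    simp [insert_erase (mem_sigma.1 hq).2]
  · rintro ⟨b, P⟩ hq
    obtain ⟨hb, hP⟩ := mem_sigma.1 hq
    simp [erase_insert ((mem_setPartitions.1 hP).2.notMem_of_sdiff (mem_filter.1 hb).2)]
  · rintro ⟨P, b⟩ hq
    dsimp only
    rw [← mul_prod_erase P _ (mem_sigma.1 hq).2, mul_assoc]

theorem succ_mul_partialBell_succ (s : Finset γ) (k : ℕ) :
    (k + 1) * partialBell x s (k + 1) =
      ∑ b ∈ s.powerset with b.Nonempty, x #b * partialBell x (s \ b) k := by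
  have h := sum_setPartitions_succ_sum_mul_prod x 1 s k
  simp only [Pi.one_apply, one_mul, sum_const] at h
  rw [← h, partialBell, mul_sum]
  refine sum_congr rfl fun P hP ↦ ?_
  rw [(mem_setPartitions.1 hP).1, nsmul_eq_mul, Nat.cast_succ]

theorem partialBell_succ_of_mem {s : Finset γ} {a : γ} (ha : a ∈ s) (k : ℕ) :
    partialBell x s (k + 1) =
      ∑ b ∈ s.powerset with a ∈ b, x #b * partialBell x (s \ b) k := by
  have h := sum_setPartitions_succ_sum_mul_prod x (fun b ↦ if a ∈ b then 1 else 0) s k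
  simp only [ite_mul, one_mul, zero_mul, ← sum_filter, filter_filter] at h
  rw [partialBell]
  convert h using 1
  · refine sum_congr rfl fun P hP ↦ ?_
    rw [sum_const, (mem_setPartitions.1 hP).2.card_filter_mem ha, one_smul]
  · exact sum_congr (filter_congr fun b _ ↦ ⟨fun h ↦ ⟨⟨a, h⟩, h⟩, And.right⟩) fun _ _ ↦ rfl

end PartialBell

lemma bell_eq_partialBell (x : ℕ → ℚ) (n k : ℕ) :
    Bell x n k = partialBell x (univ : Finset (Fin n)) k := by
  simp only [Bell, partialBell, setPartitions, powerset_univ, IsSetPartition]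

lemma partialBell_eq_bell (x : ℕ → ℚ) (s : Finset γ) (k : ℕ) :
    partialBell x s k = Bell x #s k := by
  let e : Fin #s ↪ γ := s.equivFin.symm.toEmbedding.trans (.subtype (· ∈ s))
  have he : univ.map e = s := by
    rw [← map_map, univ_map_equiv_to_embedding, univ_eq_attach, attach_map_val]
  rw [bell_eq_partialBell, ← partialBell_map x e, he]

end SetPartition

lemma partialBell_univ_sdiff (x : ℕ → ℚ) {n : ℕ} (b : Finset (Fin n)) (k : ℕ) :
    partialBell x (univ \ b) k = Bell x (n - #b) k := by
  rw [partialBell_eq_bell, card_univ_sdiff, Fintype.card_fin]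

theorem bell_succ_succ (x : ℕ → ℚ) (n k : ℕ) :
    Bell x (n + 1) (k + 1) = ∑ j ∈ range (n + 1), n.choose j * x (j + 1) * Bell x (n - j) k := by
  rw [bell_eq_partialBell, partialBell_succ_of_mem x (mem_univ 0)]
  simp_rw [partialBell_univ_sdiff]
  rw [sum_powerset_filter_mem_apply_card (fun m ↦ x m * Bell x (n + 1 - m) k) (mem_univ 0)]
  simp [nsmul_eq_mul, mul_assoc]

theorem succ_mul_bell_succ_succ (x : ℕ → ℚ) (n k : ℕ) :
    (k + 1) * Bell x (n + 1) (k + 1) =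
      ∑ j ∈ range (n + 1), (n + 1).choose (j + 1) * x (j + 1) * Bell x (n - j) k := by
  rw [bell_eq_partialBell, succ_mul_partialBell_succ]
  simp_rw [partialBell_univ_sdiff]
  rw [sum_powerset_filter_nonempty_apply_card (fun m ↦ x m * Bell x (n + 1 - m) k)]
  simp [nsmul_eq_mul, mul_assoc]

lemma bell_eq_zero_of_lt (x : ℕ → ℚ) {n k : ℕ} (h : n < k) : Bell x n k = 0 := by
  rw [bell_eq_partialBell]
  exact partialBell_eq_zero_of_card_lt x (by simpa using h)

lemma choose_mul_sub_div_eq (n k α : ℕ) :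
    (n.choose α : ℚ) * ((k + 1) - (n + 1) / (α + 1)) =
      (k + 1) * n.choose α - (n + 1).choose (α + 1) := by
  have h : ((n + 1 : ℕ) : ℚ) * n.choose α = (n + 1).choose (α + 1) * (α + 1 : ℕ) := by
    exact_mod_cast Nat.add_one_mul_choose_eq n α
  push_cast at h
  field_simp
  linear_combination -h

theorem sum_range_choose_mul_bell_eq_zero (x : ℕ → ℚ) (n k : ℕ) :
    ∑ α ∈ range (n + 1),
      (n.choose α : ℚ) * (((k : ℚ) + 1) - ((n : ℚ) + 1) / ((α : ℚ) + 1)) *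
        x (α + 1) * Bell x (n - α) k = 0 := by
  calc _ = (k + 1) * ∑ α ∈ range (n + 1), n.choose α * x (α + 1) * Bell x (n - α) k -
        ∑ α ∈ range (n + 1), (n + 1).choose (α + 1) * x (α + 1) * Bell x (n - α) k := by
        rw [mul_sum, ← sum_sub_distrib]
        refine sum_congr rfl fun α _ ↦ ?_
        rw [choose_mul_sub_div_eq]
        ring
    _ = 0 := by rw [← bell_succ_succ, ← succ_mul_bell_succ_succ, sub_self]

theorem bell_cvijovic_main_general (x : ℕ → ℚ) (n k : ℕ) :
    ((n : ℚ) - k) * x 1 * Bell x n k =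
      ∑ α ∈ Finset.Icc 1 (n - k),
        (n.choose α : ℚ) * (((k : ℚ) + 1) - ((n : ℚ) + 1) / ((α : ℚ) + 1)) *
          x (α + 1) * Bell x (n - α) k := by
  have htotal := sum_range_choose_mul_bell_eq_zero x n k
  set term : ℕ → ℚ := fun α ↦ (n.choose α : ℚ) * (((k : ℚ) + 1) - ((n : ℚ) + 1) / ((α : ℚ) + 1)) *
    x (α + 1) * Bell x (n - α) k
  have hsub : insert 0 (Icc 1 (n - k)) ⊆ range (n + 1) := fun α ↦ by
    simp only [mem_insert, mem_Icc, mem_range]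
    omega
  have hvanish : ∀ α ∈ range (n + 1), α ∉ insert 0 (Icc 1 (n - k)) → term α = 0 := by
    intro α hα hα'
    simp only [mem_insert, mem_Icc, mem_range] at hα hα'
    simp only [term, bell_eq_zero_of_lt x (by omega : n - α < k), mul_zero]
  rw [← sum_subset hsub hvanish, sum_insert (by simp)] at htotal
  have hterm0 : term 0 = (k - n) * x 1 * Bell x n k := by simp [term]
  linear_combination -htotal + hterm0

/-- For `n > k ≥ 1`:
`(n-k)·x₁·B_{n,k} = Σ_{α=1}^{n-k} (n choose α)·[(k+1) - (n+1)/(α+1)]·x_{α+1}·B_{n-α,k}`. -/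
theorem bell_cvijovic_main (x : ℕ → ℚ) (n k : ℕ) (hk : 1 ≤ k) (hkn : k < n) :
    ((n : ℚ) - k) * x 1 * Bell x n k =
      ∑ α ∈ Finset.Icc 1 (n - k),
        (n.choose α : ℚ) * (((k : ℚ) + 1) - ((n : ℚ) + 1) / ((α : ℚ) + 1)) *
          x (α + 1) * Bell x (n - α) k :=
  bell_cvijovic_main_general x n k
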